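/- Let l be a prime with l ∣ q − 1, D ∈ F_q[T] monic with l ∤ deg D, and γ ∈ F_q^× with γ ≢ (−1)^{deg D} mod (F_q^×)^l. Then [k((γD)^{1/l}) : k] = l where k = F_q(T), the infinite place of k is totally ramified in k((γD)^{1/l})/k, and the constant field of k((γD)^{1/l}) is F_q. -/

import Mathlib

/-! Since `γD` has degree prime to `l`, it is not an `l`-th power in `F(T)`, so `X^l - γD` is
irreducible; the same degree count pins the value of the root at infinity to `deg D / l`.
An element `x` of `F(T)(y)` algebraic over `F` either lies in `F(T)`, whose only elements
algebraic over `F` are constants, or generates the whole extension of prime degree `l`. In the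
latter case `y` lies in `E(T)` for the algebraic extension `E = F(x)`, where `T` stays
transcendental; but there `γD` still has degree prime to `l`, so it has no `l`-th root. -/

open Polynomial IntermediateField

namespace RatFunc

variable {K : Type*} [Field K]

theorem intDegree_pow (b : RatFunc K) (n : ℕ) : (b ^ n).intDegree = n * b.intDegree := by
  induction n with
  | zero => simp
  | succ n ih =>
    rcases eq_or_ne b 0 with rfl | hb
    · simp
    rw [pow_succ, intDegree_mul (pow_ne_zero n hb) hb, ih]
    push_cast
    ring

theorem pow_ne_algebraMap_of_not_dvd_natDegree {l : ℕ} {P : K[X]} (hP : ¬ l ∣ P.natDegree)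
    (b : RatFunc K) : b ^ l ≠ algebraMap K[X] (RatFunc K) P := by
  intro hb
  have hdeg := congrArg intDegree hb
  rw [intDegree_pow, intDegree_polynomial] at hdeg
  exact hP (Int.natCast_dvd_natCast.mp ⟨b.intDegree, hdeg.symm⟩)

end RatFunc

theorem IntermediateField.eq_bot_or_eq_of_le_of_finrank_prime {K L : Type*} [Field K] [Field L]
    [Algebra K L] {E₁ E₂ : IntermediateField K L} (h : E₁ ≤ E₂)
    (hp : (Module.finrank K E₂).Prime) : E₁ = ⊥ ∨ E₁ = E₂ := by
  have : FiniteDimensional K E₂ := Module.finite_of_finrank_pos hp.pos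
  rcases hp.eq_one_or_self_of_dvd _ (finrank_dvd_of_le_right h) with h1 | hE
  · exact .inl (finrank_eq_one_iff.mp h1)
  · exact .inr (eq_of_le_of_finrank_eq h hE)

theorem finrank_adjoin_of_pow_eq_of_prime {K L : Type*} [Field K] [Field L] [Algebra K L]
    {p : ℕ} (hp : p.Prime) {a : K} (ha : ∀ b : K, b ^ p ≠ a) {y : L}
    (hy : y ^ p = algebraMap K L a) : Module.finrank K K⟮y⟯ = p := by
  have hmonic : (X ^ p - C a).Monic := monic_X_pow_sub_C a hp.ne_zero
  have hroot : aeval y (X ^ p - C a) = 0 := by simp [hy]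
  rw [adjoin.finrank ⟨_, hmonic, hroot⟩,
    ← minpoly.eq_of_irreducible_of_monic (X_pow_sub_C_irreducible_of_prime hp ha) hroot hmonic,
    natDegree_X_pow_sub_C]

theorem WithZero.eq_coe_ofAdd_div_of_pow_eq {u : WithZero (Multiplicative ℚ)} {n : ℕ}
    (hn : n ≠ 0) {q : ℚ} (h : u ^ n = Multiplicative.ofAdd q) :
    u = Multiplicative.ofAdd (q / n) := by
  have hu : u ≠ 0 := by rintro rfl; simp [hn] at h
  obtain ⟨v, rfl⟩ := WithZero.ne_zero_iff_exists.mp hu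
  rw [← WithZero.coe_pow, WithZero.coe_inj] at h
  rw [WithZero.coe_inj, ← ofAdd_toAdd v, ← toAdd_ofAdd q, ← h, toAdd_pow, nsmul_eq_mul]
  field_simp

section ConstantField

variable {F Ω : Type*} [Field F] [Field Ω] [Algebra F Ω] [Algebra (RatFunc F) Ω]
  [IsScalarTower F (RatFunc F) Ω]

theorem algebraMap_ratFunc_mem_adjoin_algebraMap_X (E : IntermediateField F Ω) (r : RatFunc F) :
    algebraMap (RatFunc F) Ω r ∈ E⟮algebraMap (RatFunc F) Ω RatFunc.X⟯ := by
  let f := IsScalarTower.toAlgHom F (RatFunc F) Ω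
  have hr : f r ∈ (adjoin F {(RatFunc.X : RatFunc F)}).map f :=
    ⟨r, by rw [RatFunc.adjoin_X]; exact mem_top, rfl⟩
  rw [adjoin_map, Set.image_singleton] at hr
  exact (adjoin_simple_le_iff (K := (E⟮f RatFunc.X⟯).restrictScalars F)).mpr
    (mem_adjoin_simple_self E _) hr

theorem pow_ne_algebraMap_of_mem_adjoin_of_isAlgebraic {l : ℕ} {P : F[X]}
    (hP : ¬ l ∣ P.natDegree) {x : Ω} (hx : IsAlgebraic F x) {z : Ω}
    (hz : z ∈ (RatFunc F)⟮x⟯) :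
    z ^ l ≠ algebraMap (RatFunc F) Ω (algebraMap F[X] (RatFunc F) P) := by
  set E := F⟮x⟯
  set t := algebraMap (RatFunc F) Ω RatFunc.X
  have : Algebra.IsAlgebraic F E := isAlgebraic_adjoin_simple hx.isIntegral
  have ht : Transcendental E t :=
    ((transcendental_algebraMap_iff (algebraMap (RatFunc F) Ω).injective).mpr
      RatFunc.transcendental_X).extendScalars E
  let M : IntermediateField (RatFunc F) Ω :=
    (E⟮t⟯).toSubfield.toIntermediateField (algebraMap_ratFunc_mem_adjoin_algebraMap_X E)
  have hxM : x ∈ M :=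
    show x ∈ E⟮t⟯ from (E⟮t⟯).algebraMap_mem ⟨x, mem_adjoin_simple_self F x⟩
  have hzE : z ∈ E⟮t⟯ := adjoin_simple_le_iff.mpr hxM hz
  have hPt : algebraMap (RatFunc F) Ω (algebraMap F[X] (RatFunc F) P)
      = aeval t (P.map (algebraMap F E)) := by
    rw [aeval_map_algebraMap, aeval_algebraMap_apply, RatFunc.aeval_X_left_eq_algebraMap]
  intro hzl
  let e := RatFunc.algEquivOfTranscendental t ht
  refine RatFunc.pow_ne_algebraMap_of_not_dvd_natDegree (P := P.map (algebraMap F E))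
    (by rwa [natDegree_map_eq_of_injective (algebraMap F E).injective]) (e.symm ⟨z, hzE⟩) ?_
  apply e.injective
  rw [map_pow, e.apply_symm_apply, RatFunc.algEquivOfTranscendental_algebraMap]
  ext
  rw [← aeval_coe, AdjoinSimple.coe_gen, ← hPt, ← hzl]
  rfl

theorem exists_eq_algebraMap_of_mem_bot_of_isAlgebraic {x : Ω}
    (hx : x ∈ (⊥ : IntermediateField (RatFunc F) Ω)) (halg : IsAlgebraic F x) :
    ∃ c : F, x = algebraMap F Ω c := by
  obtain ⟨r, rfl⟩ := mem_bot.mp hx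
  have hr : IsAlgebraic F r :=
    (isAlgebraic_algebraMap_iff (algebraMap (RatFunc F) Ω).injective).mp halg
  obtain ⟨c, rfl⟩ : ∃ c, r = RatFunc.C c := by_contra fun h ↦ r.transcendental_of_ne_C h hr
  exact ⟨c, by rw [← RatFunc.algebraMap_eq_C, ← IsScalarTower.algebraMap_apply]⟩

end ConstantField

theorem stmt19_general (F : Type*) [Field F] [DecidableEq (RatFunc F)]
    (l : ℕ) (hl : l.Prime)
    (D : Polynomial F) (hln : ¬ l ∣ D.natDegree)
    (γ : Fˣ)
    (Ω : Type*) [Field Ω] [Algebra F Ω] [Algebra (RatFunc F) Ω]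
    [IsScalarTower F (RatFunc F) Ω]
    (y : Ω)
    (hy : y ^ l = algebraMap (RatFunc F) Ω
      (RatFunc.C (γ : F) * algebraMap (Polynomial F) (RatFunc F) D)) :
    Module.finrank (RatFunc F) ↥(IntermediateField.adjoin (RatFunc F) {y}) = l ∧
    (∀ w : Valuation Ω (WithZero (Multiplicative ℚ)),
      (∀ x : RatFunc F, w (algebraMap (RatFunc F) Ω x)
          = WithZero.map' (AddMonoidHom.toMultiplicative (Int.castAddHom ℚ))
              (FunctionField.inftyValuation F x)) →
      w y = ((Multiplicative.ofAdd ((D.natDegree : ℚ) / l) : Multiplicative ℚ)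
        : WithZero (Multiplicative ℚ))) ∧
    (∀ x : Ω, x ∈ IntermediateField.adjoin (RatFunc F) {y} → IsAlgebraic F x →
      ∃ c : F, x = algebraMap F Ω c) := by
  set P : F[X] := C (γ : F) * D
  have hPdeg : P.natDegree = D.natDegree := natDegree_C_mul γ.ne_zero
  have hP : ¬ l ∣ P.natDegree := hPdeg ▸ hln
  have hyP : y ^ l = algebraMap (RatFunc F) Ω (algebraMap F[X] (RatFunc F) P) := by
    rw [hy, ← RatFunc.algebraMap_C, ← map_mul]
  have hdeg : Module.finrank (RatFunc F) (RatFunc F)⟮y⟯ = l :=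
    finrank_adjoin_of_pow_eq_of_prime hl (RatFunc.pow_ne_algebraMap_of_not_dvd_natDegree hP) hyP
  refine ⟨hdeg, fun w hw ↦ ?_, fun x hx halg ↦ ?_⟩
  · have hP0 : P ≠ 0 := by rintro h; simp [h] at hP
    apply WithZero.eq_coe_ofAdd_div_of_pow_eq hl.ne_zero
    rw [← map_pow, hyP, hw]
    show WithZero.map' _ (RatFunc.inftyValuationDef F _) = _
    rw [RatFunc.inftyValuation.polynomial F hP0, hPdeg]
    rfl
  · rcases eq_bot_or_eq_of_le_of_finrank_prime (adjoin_simple_le_iff.mpr hx) (hdeg ▸ hl)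
      with hbot | htop
    · exact exists_eq_algebraMap_of_mem_bot_of_isAlgebraic (hbot ▸ mem_adjoin_simple_self _ x) halg
    · exact absurd hyP (pow_ne_algebraMap_of_mem_adjoin_of_isAlgebraic hP halg
        (htop ▸ mem_adjoin_simple_self _ y))

/-- Let `k = F_q(T)`, `l` a prime with `l ∣ q − 1`, `D ∈ F_q[T]` monic with `l ∤ deg D`, and
`γ ∈ F_q^×` with `γ ≢ (−1)^{deg D} mod (F_q^×)^l`.  Then `K = k((γD)^{1/l})` has degree `l`
over `k`, the infinite place of `k` is totally ramified in `K/k` (expressed below by the fact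
that any valuation extending the infinity valuation takes on `(γD)^{1/l}` the value
`deg D / l`, of exact denominator `l` since `l ∤ deg D`), and the constant field of `K`
is `F_q`. -/
theorem stmt19 (F : Type*) [Field F] [Fintype F] [DecidableEq (RatFunc F)]
    (l : ℕ) (hl : l.Prime) (hlq : l ∣ Fintype.card F - 1)
    (D : Polynomial F) (hD : D.Monic) (hln : ¬ l ∣ D.natDegree)
    (γ : Fˣ) (hγ : ¬ ∃ μ : Fˣ, γ = (-1 : Fˣ) ^ D.natDegree * μ ^ l)
    (Ω : Type*) [Field Ω] [Algebra F Ω] [Algebra (RatFunc F) Ω]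
    [IsScalarTower F (RatFunc F) Ω]
    (y : Ω)
    (hy : y ^ l = algebraMap (RatFunc F) Ω
      (RatFunc.C (γ : F) * algebraMap (Polynomial F) (RatFunc F) D)) :
    Module.finrank (RatFunc F) ↥(IntermediateField.adjoin (RatFunc F) {y}) = l ∧
    (∀ w : Valuation Ω (WithZero (Multiplicative ℚ)),
      (∀ x : RatFunc F, w (algebraMap (RatFunc F) Ω x)
          = WithZero.map' (AddMonoidHom.toMultiplicative (Int.castAddHom ℚ))
              (FunctionField.inftyValuation F x)) →
      w y = ((Multiplicative.ofAdd ((D.natDegree : ℚ) / l) : Multiplicative ℚ)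
        : WithZero (Multiplicative ℚ))) ∧
    (∀ x : Ω, x ∈ IntermediateField.adjoin (RatFunc F) {y} → IsAlgebraic F x →
      ∃ c : F, x = algebraMap F Ω c) :=
  stmt19_general F l hl D hln γ Ω y hy
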